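/- Let f : 𝔻 → E be holomorphic with f(z) ≠ 0 for all z. Then the normalized Laplacian Δ(ln ‖f(z)‖²) equals (‖f(z)‖²‖f'(z)‖² − |⟨f'(z), f(z)⟩|²)/‖f(z)‖⁴, where Δ = ∂∂̄. In particular, ln‖f(z)‖² is subharmonic. -/

import Mathlib

/-!
Everything reduces to the Wirtinger calculus of `⟪g, h⟫` for holomorphic `g`, `h`: since the inner
product is conjugate-linear in its first slot, `∂⟪g, h⟫ = ⟪g, h'⟫` and `∂̄⟪g, h⟫ = ⟪g', h⟫`. With
`N = ⟪f, f⟫ = ‖f‖²` this gives `∂̄ log N = ⟪f', f⟫ / N`, and then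
`∂∂̄ log N = ⟪f', f'⟫ / N - ⟪f', f⟫ ⟪f, f'⟫ / N² = (‖f‖²‖f'‖² - |⟪f, f'⟫|²) / ‖f‖⁴`,
which is nonnegative by Cauchy–Schwarz.
-/

open Complex
open scoped InnerProductSpace

/-- Wirtinger derivative `∂ = ½(∂/∂x − i·∂/∂y)`. -/
noncomputable def wD {F : Type*} [NormedAddCommGroup F] [NormedSpace ℂ F]
    (f : ℂ → F) (z : ℂ) : F :=
  (2:ℂ)⁻¹ • (fderiv ℝ f z 1 - Complex.I • fderiv ℝ f z Complex.I)

/-- Conjugate Wirtinger derivative `∂̄ = ½(∂/∂x + i·∂/∂y)`. -/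
noncomputable def wDb {F : Type*} [NormedAddCommGroup F] [NormedSpace ℂ F]
    (f : ℂ → F) (z : ℂ) : F :=
  (2:ℂ)⁻¹ • (fderiv ℝ f z 1 + Complex.I • fderiv ℝ f z Complex.I)

open Filter Topology ComplexConjugate

section Wirtinger

variable {F : Type*} [NormedAddCommGroup F] [NormedSpace ℂ F]

theorem Filter.EventuallyEq.wD_eq {f g : ℂ → F} {z : ℂ} (h : f =ᶠ[𝓝 z] g) :
    wD f z = wD g z := by
  rw [wD, wD, h.fderiv_eq]

theorem wD_of_hasDerivAt {f : ℂ → F} {f' : F} {z : ℂ} (h : HasDerivAt f f' z) :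
    wD f z = f' := by
  rw [wD, (h.hasFDerivAt.restrictScalars ℝ).fderiv]
  simp only [ContinuousLinearMap.coe_restrictScalars', ContinuousLinearMap.toSpanSingleton_apply,
    one_smul, smul_smul, I_mul_I]
  module

variable {g h : ℂ → ℂ} {z : ℂ}

theorem wD_comp_of_hasDerivAt {φ : ℂ → ℂ} {φ' : ℂ} (hφ : HasDerivAt φ φ' (g z))
    (hg : DifferentiableAt ℝ g z) : wD (φ ∘ g) z = φ' * wD g z := by
  rw [wD, wD, (hφ.comp_hasFDerivAt z hg.hasFDerivAt).fderiv]
  simp only [smul_apply, smul_eq_mul]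
  ring

theorem wDb_comp_of_hasDerivAt {φ : ℂ → ℂ} {φ' : ℂ} (hφ : HasDerivAt φ φ' (g z))
    (hg : DifferentiableAt ℝ g z) : wDb (φ ∘ g) z = φ' * wDb g z := by
  rw [wDb, wDb, (hφ.comp_hasFDerivAt z hg.hasFDerivAt).fderiv]
  simp only [smul_apply, smul_eq_mul]
  ring

theorem wD_mul (hg : DifferentiableAt ℝ g z) (hh : DifferentiableAt ℝ h z) :
    wD (g * h) z = wD g z * h z + g z * wD h z := by
  rw [wD, wD, wD, (hg.hasFDerivAt.mul hh.hasFDerivAt).fderiv]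
  simp only [add_apply, smul_apply, smul_eq_mul]
  ring

end Wirtinger

section Inner

variable {E : Type*} [NormedAddCommGroup E] [InnerProductSpace ℂ E]
  {g h : ℂ → E} {g' h' : E} {z : ℂ}

-- `inner_self_eq_norm_sq_to_K` casts through `RCLike.ofReal`, which `field_simp` and
-- `Complex.conj_mul'` do not recognise as `Complex.ofReal`.
theorem inner_self_eq_ofReal_norm_sq (x : E) : ⟪x, x⟫_ℂ = (‖x‖ : ℂ) ^ 2 := by
  exact_mod_cast inner_self_eq_norm_sq_to_K x

theorem fderiv_inner_apply_of_hasDerivAt (hg : HasDerivAt g g' z) (hh : HasDerivAt h h' z)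
    (v : ℂ) :
    fderiv ℝ (fun v => ⟪g v, h v⟫_ℂ) z v = v * ⟪g z, h'⟫_ℂ + conj v * ⟪g', h z⟫_ℂ := by
  rw [((hg.hasFDerivAt.restrictScalars ℝ).inner ℂ (hh.hasFDerivAt.restrictScalars ℝ)).fderiv]
  simp [fderivInnerCLM_apply, inner_smul_left, inner_smul_right]

theorem wD_inner (hg : HasDerivAt g g' z) (hh : HasDerivAt h h' z) :
    wD (fun v => ⟪g v, h v⟫_ℂ) z = ⟪g z, h'⟫_ℂ := by
  rw [wD, fderiv_inner_apply_of_hasDerivAt hg hh, fderiv_inner_apply_of_hasDerivAt hg hh,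
    map_one, conj_I, smul_eq_mul, smul_eq_mul]
  linear_combination (-(1 / 2) * ⟪g z, h'⟫_ℂ + (1 / 2) * ⟪g', h z⟫_ℂ) * I_mul_I

theorem wDb_inner (hg : HasDerivAt g g' z) (hh : HasDerivAt h h' z) :
    wDb (fun v => ⟪g v, h v⟫_ℂ) z = ⟪g', h z⟫_ℂ := by
  rw [wDb, fderiv_inner_apply_of_hasDerivAt hg hh, fderiv_inner_apply_of_hasDerivAt hg hh,
    map_one, conj_I, smul_eq_mul, smul_eq_mul]
  linear_combination ((1 / 2) * ⟪g z, h'⟫_ℂ - (1 / 2) * ⟪g', h z⟫_ℂ) * I_mul_I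

variable {f : ℂ → E}

theorem wDb_log_normSq {f' : E} (hf : HasDerivAt f f' z) (hz : f z ≠ 0) :
    wDb (fun v => ((Real.log (‖f v‖ ^ 2) : ℝ) : ℂ)) z = ⟪f', f z⟫_ℂ * (⟪f z, f z⟫_ℂ)⁻¹ := by
  have hlog : (fun v => ((Real.log (‖f v‖ ^ 2) : ℝ) : ℂ)) = Complex.log ∘ fun v => ⟪f v, f v⟫_ℂ := by
    ext v
    rw [Function.comp_apply, inner_self_eq_ofReal_norm_sq, Complex.ofReal_log (by positivity)]
    push_cast
    rfl
  have hslit : ⟪f z, f z⟫_ℂ ∈ Complex.slitPlane := by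
    rw [inner_self_eq_ofReal_norm_sq]
    exact_mod_cast Complex.ofReal_mem_slitPlane.2 (by positivity)
  have hN : DifferentiableAt ℝ (fun v => ⟪f v, f v⟫_ℂ) z :=
    (hf.differentiableAt.restrictScalars ℝ).inner ℂ (hf.differentiableAt.restrictScalars ℝ)
  rw [hlog, wDb_comp_of_hasDerivAt (Complex.hasDerivAt_log hslit) hN, wDb_inner hf hf, mul_comm]

theorem wD_wDb_log_normSq (hf : ∀ᶠ w in 𝓝 z, DifferentiableAt ℂ f w)
    (hf' : DifferentiableAt ℂ (deriv f) z) (hz : f z ≠ 0) :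
    wD (fun w => wDb (fun v => ((Real.log (‖f v‖ ^ 2) : ℝ) : ℂ)) w) z =
      (((‖f z‖ ^ 2 * ‖deriv f z‖ ^ 2 - ‖⟪f z, deriv f z⟫_ℂ‖ ^ 2) / ‖f z‖ ^ 4 : ℝ) : ℂ) := by
  have hfz := hf.self_of_nhds.hasDerivAt
  have hN : DifferentiableAt ℝ (fun v => ⟪f v, f v⟫_ℂ) z :=
    (hfz.differentiableAt.restrictScalars ℝ).inner ℂ (hfz.differentiableAt.restrictScalars ℝ)
  have hq : DifferentiableAt ℝ (fun v => ⟪deriv f v, f v⟫_ℂ) z :=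
    (hf'.restrictScalars ℝ).inner ℂ (hfz.differentiableAt.restrictScalars ℝ)
  have hinv := hasDerivAt_inv (inner_self_ne_zero (𝕜 := ℂ) |>.2 hz)
  calc _ = wD ((fun v => ⟪deriv f v, f v⟫_ℂ) * ((·⁻¹) ∘ fun v => ⟪f v, f v⟫_ℂ)) z := by
        refine Filter.EventuallyEq.wD_eq ?_
        filter_upwards [hf, hfz.continuousAt.eventually_ne hz] with w hw hw0
        exact wDb_log_normSq hw.hasDerivAt hw0
    _ = ⟪deriv f z, deriv f z⟫_ℂ * (⟪f z, f z⟫_ℂ)⁻¹ +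
          conj ⟪f z, deriv f z⟫_ℂ * (-(⟪f z, f z⟫_ℂ ^ 2)⁻¹ * ⟪f z, deriv f z⟫_ℂ) := by
        rw [wD_mul hq ((hinv.differentiableAt.restrictScalars ℝ).comp z hN),
          wD_comp_of_hasDerivAt hinv hN, wD_inner hf'.hasDerivAt hfz, wD_inner hfz hfz,
          inner_conj_symm]
        rfl
    _ = _ := by
        have hf0 : (‖f z‖ : ℂ) ≠ 0 := by exact_mod_cast norm_ne_zero_iff.2 hz
        rw [inner_self_eq_ofReal_norm_sq, inner_self_eq_ofReal_norm_sq, mul_left_comm,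
          Complex.conj_mul']
        push_cast
        field_simp
        ring

end Inner

/-- for holomorphic nonvanishing `f`,
`Δ(ln‖f‖²) = (‖f‖²‖f'‖² − |⟨f',f⟩|²)/‖f‖⁴ ≥ 0`; in particular `ln‖f‖²` is subharmonic. -/
theorem stmt13 {E : Type*} [NormedAddCommGroup E] [InnerProductSpace ℂ E] [CompleteSpace E]
    (f : ℂ → E) (hf : DifferentiableOn ℂ f (Metric.ball 0 1))
    (hne : ∀ z ∈ Metric.ball (0:ℂ) 1, f z ≠ 0) :
    ∀ z ∈ Metric.ball (0:ℂ) 1,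
      wD (fun w => wDb (fun v => ((Real.log (‖f v‖^2) : ℝ) : ℂ)) w) z =
        (((‖f z‖^2 * ‖wD f z‖^2 - ‖⟪f z, wD f z⟫_ℂ‖^2) / ‖f z‖^4 : ℝ) : ℂ) ∧
      0 ≤ (‖f z‖^2 * ‖wD f z‖^2 - ‖⟪f z, wD f z⟫_ℂ‖^2) / ‖f z‖^4 := by
  intro z hz
  have hU := Metric.isOpen_ball.mem_nhds hz
  rw [wD_of_hasDerivAt (hf.differentiableAt hU).hasDerivAt]
  have hCS : ‖⟪f z, deriv f z⟫_ℂ‖ ^ 2 ≤ ‖f z‖ ^ 2 * ‖deriv f z‖ ^ 2 := by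
    rw [← mul_pow]
    exact pow_le_pow_left₀ (norm_nonneg _) (norm_inner_le_norm _ _) 2
  exact ⟨wD_wDb_log_normSq (hf.eventually_differentiableAt hU)
      ((hf.deriv Metric.isOpen_ball).differentiableAt hU) (hne z hz),
    div_nonneg (sub_nonneg.2 hCS) (by positivity)⟩
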